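/- The class of finite structures over the empty vocabulary is not definable in SCL: there is no SCL sentence φ over the empty vocabulary such that for every structure 𝔄 over the empty vocabulary, 𝔄 ⊨ φ (in unbounded semantics) if and only if the domain of 𝔄 is finite. Since this class is definable in universal second-order logic and every SCL formula is equivalent to a ∀SO formula, SCL is strictly less expressive than ∀SO. -/

import Mathlib

/-
Common formalization of the logics SCL (static computation logic, unbounded
game-theoretic semantics) and BndSCL (bounded semantics), following the paper
"First-order logic with self-reference".

* Games are played on arbitrary (possibly infinite) arenas; plays are maximal
  walks; strategies are functions from finite walks (histories) to positions;
  infinite plays, and finite plays ending at a dead end where `win` holds for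
  neither player, are won by nobody.
* The semantic games are formalized with positions carrying the current
  (sub)formula, an environment binding each label symbol to the labelled
  formula it most recently named (this is the standard closure rendering of
  "reference formula of a claim-symbol occurrence"), the current assignment
  and the polarity (+ = true, − = false).  The bounded game additionally
  carries a clock value.
-/

set_option autoImplicit false

universe u

/-! ## Generic two-player games on (possibly infinite) arenas -/

inductive Player : Type
  | eloise : Player
  | abelard : Player
deriving DecidableEq

def Player.opp : Player → Player
  | .eloise => .abelard
  | .abelard => .eloise

/-- A game arena: an ownership function (corresponding to the partition
`V = V₀ ∪ V₁`), an edge relation, and a predicate telling which player (if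
any) wins a play ending at a given dead-end position. -/
structure GameArena (P : Type u) where
  turn : P → Player
  edge : P → P → Prop
  win : P → Player → Prop

namespace GameArena

variable {P : Type u} (A : GameArena P)

def DeadEnd (u : P) : Prop := ∀ x, ¬ A.edge u x

/-- `w` is a finite nonempty walk whose first element is `v`. -/
def IsWalkFrom (v : P) (w : List P) : Prop :=
  w.head? = some v ∧ List.Chain' A.edge w

/-- A finite (maximal) play from `v`: a walk whose last element is a dead end. -/
def IsFinitePlay (v : P) (w : List P) : Prop :=
  A.IsWalkFrom v w ∧ ∀ u, w.getLast? = some u → A.DeadEnd u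

/-- An infinite play from `v`. -/
def IsInfPlay (v : P) (f : ℕ → P) : Prop :=
  f 0 = v ∧ ∀ n, A.edge (f n) (f (n + 1))

/-- A strategy (a function from histories to positions) of player `pl` is
legal if it always prescribes a move along an edge whenever a move exists. -/
def LegalFor (pl : Player) (v : P) (σ : List P → P) : Prop :=
  ∀ w u, A.IsWalkFrom v w → w.getLast? = some u → A.turn u = pl →
    (∃ x, A.edge u x) → A.edge u (σ w)

/-- The strategy `σ` of player `pl` is followed in the finite play `w`. -/
def FollowsFin (pl : Player) (σ : List P → P) (w : List P) : Prop :=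
  ∀ q u x, (q ++ [x]) <+: w → q.getLast? = some u → A.turn u = pl → x = σ q

/-- The strategy `σ` of player `pl` is followed in the infinite play `f`. -/
def FollowsInf (pl : Player) (σ : List P → P) (f : ℕ → P) : Prop :=
  ∀ n, A.turn (f n) = pl →
    f (n + 1) = σ (List.ofFn fun i : Fin (n + 1) => f i)

/-- `σ` is a winning strategy of player `pl` from `v`: it is legal, every
finite maximal play following it ends in a dead end won by `pl`, and no
infinite play follows it (infinite plays are won by neither player). -/
def WinningStrategy (pl : Player) (v : P) (σ : List P → P) : Prop :=
  A.LegalFor pl v σ ∧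
  (∀ w, A.IsFinitePlay v w → A.FollowsFin pl σ w →
      ∃ u, w.getLast? = some u ∧ A.win u pl) ∧
  (∀ f, A.IsInfPlay v f → ¬ A.FollowsInf pl σ f)

def HasWinningStrategy (pl : Player) (v : P) : Prop :=
  ∃ σ : List P → P, A.WinningStrategy pl v σ

end GameArena

/-- A positional strategy: its moves depend only on the current position. -/
def Positional {P : Type u} (σ : List P → P) : Prop :=
  ∀ q q' : List P, q.getLast? = q'.getLast? → σ q = σ q'

/-! ## Syntax of SCL / BndSCL -/

/-- A purely relational vocabulary. -/
structure Vocab : Type 1 where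
  Rel : Type
  arity : Rel → ℕ

/-- Formulas of SCL / BndSCL over the vocabulary `V`.  Variables and label
symbols are natural numbers; `claim L` is the claim symbol `C_L` and
`lab L φ` is the labelled formula `L φ`. -/
inductive SCLFormula (V : Vocab) : Type
  | bot : SCLFormula V
  | eq (x y : ℕ) : SCLFormula V
  | rel (R : V.Rel) (args : Fin (V.arity R) → ℕ) : SCLFormula V
  | claim (L : ℕ) : SCLFormula V
  | not (φ : SCLFormula V) : SCLFormula V
  | and (φ ψ : SCLFormula V) : SCLFormula V
  | or (φ ψ : SCLFormula V) : SCLFormula V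
  | ex (x : ℕ) (φ : SCLFormula V) : SCLFormula V
  | all (x : ℕ) (φ : SCLFormula V) : SCLFormula V
  | lab (L : ℕ) (φ : SCLFormula V) : SCLFormula V

namespace SCLFormula

variable {V : Vocab}

/-- First-order atoms. -/
def IsFOAtom : SCLFormula V → Prop
  | .bot => True
  | .eq _ _ => True
  | .rel _ _ => True
  | _ => False

/-- Purely first-order formulas (no claim symbols, no label symbols). -/
def IsFO : SCLFormula V → Prop
  | .bot => True
  | .eq _ _ => True
  | .rel _ _ => True
  | .claim _ => False
  | .not φ => IsFO φ
  | .and φ ψ => IsFO φ ∧ IsFO ψ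
  | .or φ ψ => IsFO φ ∧ IsFO ψ
  | .ex _ φ => IsFO φ
  | .all _ φ => IsFO φ
  | .lab _ _ => False

/-- Free (individual) variables. -/
def freeVars : SCLFormula V → Finset ℕ
  | .bot => ∅
  | .eq x y => {x, y}
  | .rel _ a => Finset.image a Finset.univ
  | .claim _ => ∅
  | .not φ => freeVars φ
  | .and φ ψ => freeVars φ ∪ freeVars ψ
  | .or φ ψ => freeVars φ ∪ freeVars ψ
  | .ex x φ => freeVars φ \ {x}
  | .all x φ => freeVars φ \ {x}
  | .lab _ φ => freeVars φ

/-- All variables occurring in a formula (free or bound). -/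
def vars : SCLFormula V → Finset ℕ
  | .bot => ∅
  | .eq x y => {x, y}
  | .rel _ a => Finset.image a Finset.univ
  | .claim _ => ∅
  | .not φ => vars φ
  | .and φ ψ => vars φ ∪ vars ψ
  | .or φ ψ => vars φ ∪ vars ψ
  | .ex x φ => insert x (vars φ)
  | .all x φ => insert x (vars φ)
  | .lab _ φ => vars φ

/-- Sentences: formulas with no free variables. -/
def IsSentence (φ : SCLFormula V) : Prop := freeVars φ = ∅

end SCLFormula

/-! ## Structures and first-order (Tarski) satisfaction -/

/-- A (suitable) model for vocabulary `V`: a nonempty domain together with an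
interpretation of all relation symbols. -/
structure Struct (V : Vocab) where
  Dom : Type u
  dom_nonempty : Nonempty Dom
  interp : ∀ R : V.Rel, (Fin (V.arity R) → Dom) → Prop

attribute [instance] Struct.dom_nonempty

/-- Satisfaction of atoms (false on non-atoms). -/
def atomSat {V : Vocab} (M : Struct.{u} V) (s : ℕ → M.Dom) : SCLFormula V → Prop
  | .bot => False
  | .eq x y => s x = s y
  | .rel R a => M.interp R fun i => s (a i)
  | _ => False

/-- Standard (Tarski) first-order satisfaction.  It is only meaningful on
purely first-order formulas; claim symbols are interpreted as `False` and
label symbols are ignored. -/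
def FOSat {V : Vocab} (M : Struct.{u} V) : (ℕ → M.Dom) → SCLFormula V → Prop
  | _, .bot => False
  | s, .eq x y => s x = s y
  | s, .rel R a => M.interp R fun i => s (a i)
  | _, .claim _ => False
  | s, .not φ => ¬ FOSat M s φ
  | s, .and φ ψ => FOSat M s φ ∧ FOSat M s ψ
  | s, .or φ ψ => FOSat M s φ ∨ FOSat M s ψ
  | s, .ex x φ => ∃ a : M.Dom, FOSat M (Function.update s x a) φ
  | s, .all x φ => ∀ a : M.Dom, FOSat M (Function.update s x a) φ
  | s, .lab _ φ => FOSat M s φ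

/-! ## The evaluation games -/

/-- A position of the semantic game: the current formula, the environment
recording for each label symbol `L` the reference formula `L ψ` it currently
names, the current assignment, and the polarity (`true` = `+`). -/
structure SCLPos (V : Vocab) (D : Type u) : Type u where
  form : SCLFormula V
  env : ℕ → Option (SCLFormula V)
  asg : ℕ → D
  pol : Bool

/-- Which player moves at a given position. (At positions with at most one
successor the owner is irrelevant; we let Eloise own them.) -/
def posTurn {V : Vocab} {D : Type u} (p : SCLPos V D) : Player :=
  match p.form, p.pol with
  | .and _ _, true => .abelard
  | .and _ _, false => .eloise
  | .or _ _, true => .eloise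
  | .or _ _, false => .abelard
  | .all _ _, true => .abelard
  | .all _ _, false => .eloise
  | .ex _ _, true => .eloise
  | .ex _ _, false => .abelard
  | _, _ => .eloise

/-- Who wins a play ending at a given position: at an FO-atom position,
Eloise wins iff the atom's truth value agrees with the polarity, and Abelard
wins otherwise; plays ending anywhere else (e.g. at a claim symbol with no
reference formula, or with clock value 0) are won by neither player. -/
def posWin {V : Vocab} (M : Struct.{u} V) (p : SCLPos V M.Dom) : Player → Prop
  | .eloise => p.form.IsFOAtom ∧ (atomSat M p.asg p.form ↔ p.pol = true)
  | .abelard => p.form.IsFOAtom ∧ ¬ (atomSat M p.asg p.form ↔ p.pol = true)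

/-- Moves of the unbounded evaluation game `G_∞`. -/
inductive UStep {V : Vocab} (M : Struct.{u} V) :
    SCLPos V M.Dom → SCLPos V M.Dom → Prop
  | neg (φ : SCLFormula V) (e : ℕ → Option (SCLFormula V)) (s : ℕ → M.Dom) (b : Bool) :
      UStep M ⟨.not φ, e, s, b⟩ ⟨φ, e, s, !b⟩
  | andLeft (φ ψ : SCLFormula V) (e : ℕ → Option (SCLFormula V)) (s : ℕ → M.Dom) (b : Bool) :
      UStep M ⟨.and φ ψ, e, s, b⟩ ⟨φ, e, s, b⟩
  | andRight (φ ψ : SCLFormula V) (e : ℕ → Option (SCLFormula V)) (s : ℕ → M.Dom) (b : Bool) :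
      UStep M ⟨.and φ ψ, e, s, b⟩ ⟨ψ, e, s, b⟩
  | orLeft (φ ψ : SCLFormula V) (e : ℕ → Option (SCLFormula V)) (s : ℕ → M.Dom) (b : Bool) :
      UStep M ⟨.or φ ψ, e, s, b⟩ ⟨φ, e, s, b⟩
  | orRight (φ ψ : SCLFormula V) (e : ℕ → Option (SCLFormula V)) (s : ℕ → M.Dom) (b : Bool) :
      UStep M ⟨.or φ ψ, e, s, b⟩ ⟨ψ, e, s, b⟩
  | exStep (x : ℕ) (φ : SCLFormula V) (e : ℕ → Option (SCLFormula V)) (s : ℕ → M.Dom)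
      (b : Bool) (a : M.Dom) :
      UStep M ⟨.ex x φ, e, s, b⟩ ⟨φ, e, Function.update s x a, b⟩
  | allStep (x : ℕ) (φ : SCLFormula V) (e : ℕ → Option (SCLFormula V)) (s : ℕ → M.Dom)
      (b : Bool) (a : M.Dom) :
      UStep M ⟨.all x φ, e, s, b⟩ ⟨φ, e, Function.update s x a, b⟩
  | labStep (L : ℕ) (φ : SCLFormula V) (e : ℕ → Option (SCLFormula V)) (s : ℕ → M.Dom)
      (b : Bool) :
      UStep M ⟨.lab L φ, e, s, b⟩ ⟨φ, Function.update e L (some (.lab L φ)), s, b⟩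
  | claimStep (L : ℕ) (e : ℕ → Option (SCLFormula V)) (s : ℕ → M.Dom) (b : Bool)
      (χ : SCLFormula V) (h : e L = some χ) :
      UStep M ⟨.claim L, e, s, b⟩ ⟨χ, e, s, b⟩

/-- Moves of the `n`-bounded evaluation game: positions additionally carry a
clock value, which decreases by one exactly at jumps from a claim symbol to
its reference formula; a claim-symbol position with clock value `0` is a dead
end won by neither player. -/
inductive BStep {V : Vocab} (M : Struct.{u} V) :
    SCLPos V M.Dom × ℕ → SCLPos V M.Dom × ℕ → Prop
  | neg (φ : SCLFormula V) (e : ℕ → Option (SCLFormula V)) (s : ℕ → M.Dom) (b : Bool) (n : ℕ) :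
      BStep M (⟨.not φ, e, s, b⟩, n) (⟨φ, e, s, !b⟩, n)
  | andLeft (φ ψ : SCLFormula V) (e : ℕ → Option (SCLFormula V)) (s : ℕ → M.Dom) (b : Bool)
      (n : ℕ) : BStep M (⟨.and φ ψ, e, s, b⟩, n) (⟨φ, e, s, b⟩, n)
  | andRight (φ ψ : SCLFormula V) (e : ℕ → Option (SCLFormula V)) (s : ℕ → M.Dom) (b : Bool)
      (n : ℕ) : BStep M (⟨.and φ ψ, e, s, b⟩, n) (⟨ψ, e, s, b⟩, n)
  | orLeft (φ ψ : SCLFormula V) (e : ℕ → Option (SCLFormula V)) (s : ℕ → M.Dom) (b : Bool)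
      (n : ℕ) : BStep M (⟨.or φ ψ, e, s, b⟩, n) (⟨φ, e, s, b⟩, n)
  | orRight (φ ψ : SCLFormula V) (e : ℕ → Option (SCLFormula V)) (s : ℕ → M.Dom) (b : Bool)
      (n : ℕ) : BStep M (⟨.or φ ψ, e, s, b⟩, n) (⟨ψ, e, s, b⟩, n)
  | exStep (x : ℕ) (φ : SCLFormula V) (e : ℕ → Option (SCLFormula V)) (s : ℕ → M.Dom)
      (b : Bool) (n : ℕ) (a : M.Dom) :
      BStep M (⟨.ex x φ, e, s, b⟩, n) (⟨φ, e, Function.update s x a, b⟩, n)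
  | allStep (x : ℕ) (φ : SCLFormula V) (e : ℕ → Option (SCLFormula V)) (s : ℕ → M.Dom)
      (b : Bool) (n : ℕ) (a : M.Dom) :
      BStep M (⟨.all x φ, e, s, b⟩, n) (⟨φ, e, Function.update s x a, b⟩, n)
  | labStep (L : ℕ) (φ : SCLFormula V) (e : ℕ → Option (SCLFormula V)) (s : ℕ → M.Dom)
      (b : Bool) (n : ℕ) :
      BStep M (⟨.lab L φ, e, s, b⟩, n) (⟨φ, Function.update e L (some (.lab L φ)), s, b⟩, n)
  | claimStep (L : ℕ) (e : ℕ → Option (SCLFormula V)) (s : ℕ → M.Dom) (b : Bool)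
      (χ : SCLFormula V) (n : ℕ) (h : e L = some χ) :
      BStep M (⟨.claim L, e, s, b⟩, n + 1) (⟨χ, e, s, b⟩, n)

/-- The unbounded evaluation game `G_∞(𝔄, ·, ·)` as a game arena. -/
def gameU {V : Vocab} (M : Struct.{u} V) : GameArena (SCLPos V M.Dom) where
  turn := posTurn
  edge := UStep M
  win := posWin M

/-- The bounded evaluation games `G_n(𝔄, ·, ·)` (for all clock values `n`
simultaneously) as a game arena. -/
def gameB {V : Vocab} (M : Struct.{u} V) : GameArena (SCLPos V M.Dom × ℕ) where
  turn p := posTurn p.1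
  edge := BStep M
  win p := posWin M p.1

/-- The initial position of the evaluation game for `φ` under assignment `s`:
empty environment and positive polarity. -/
def initPos {V : Vocab} {D : Type u} (φ : SCLFormula V) (s : ℕ → D) : SCLPos V D :=
  ⟨φ, fun _ => none, s, true⟩

/-- Truth under the unbounded semantics (the logic SCL):
`𝔄,s ⊨ φ` iff Eloise has a winning strategy in `G_∞(𝔄,s,φ)`. -/
def SCLTrue {V : Vocab} (M : Struct.{u} V) (s : ℕ → M.Dom) (φ : SCLFormula V) : Prop :=
  (gameU M).HasWinningStrategy .eloise (initPos φ s)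

/-! ### The bounded game `G_ω` -/

/-- Positions of the game `G_ω`: the initial position (where Abelard picks a
number `n'`), the intermediate positions (where Eloise picks some `n ≥ n'`),
and the positions of the `n`-bounded games. -/
inductive GOPos (V : Vocab) (D : Type u) : Type u
  | start : GOPos V D
  | mid (n' : ℕ) : GOPos V D
  | inner (p : SCLPos V D) (clock : ℕ) : GOPos V D

inductive GOStep {V : Vocab} (M : Struct.{u} V) (φ : SCLFormula V) (s : ℕ → M.Dom) :
    GOPos V M.Dom → GOPos V M.Dom → Prop
  | abelardPick (n' : ℕ) : GOStep M φ s .start (.mid n')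
  | eloisePick (n' n : ℕ) (h : n' ≤ n) : GOStep M φ s (.mid n') (.inner (initPos φ s) n)
  | play (p q : SCLPos V M.Dom) (m k : ℕ) (h : BStep M (p, m) (q, k)) :
      GOStep M φ s (.inner p m) (.inner q k)

def goTurn {V : Vocab} {D : Type u} : GOPos V D → Player
  | .start => .abelard
  | .mid _ => .eloise
  | .inner p _ => posTurn p

def goWin {V : Vocab} (M : Struct.{u} V) : GOPos V M.Dom → Player → Prop
  | .inner p _, pl => posWin M p pl
  | _, _ => False

/-- The bounded evaluation game `G_ω(𝔄,s,φ)`: Abelard picks `n' ∈ ℕ`, then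
Eloise picks `n ≥ n'`, and then `G_n(𝔄,s,φ)` is played. -/
def gameOmega {V : Vocab} (M : Struct.{u} V) (φ : SCLFormula V) (s : ℕ → M.Dom) :
    GameArena (GOPos V M.Dom) where
  turn := goTurn
  edge := GOStep M φ s
  win := goWin M

/-- Truth under the bounded semantics (the logic BndSCL):
`𝔄,s ⊨_ω φ` iff Eloise has a winning strategy in `G_ω(𝔄,s,φ)`. -/
def BndTrue {V : Vocab} (M : Struct.{u} V) (s : ℕ → M.Dom) (φ : SCLFormula V) : Prop :=
  (gameOmega M φ s).HasWinningStrategy .eloise .start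

/-! ## Approximants -/

/-- Auxiliary structural recursion for approximants: `k` tells what to put in
place of a claim symbol.  Label symbols are deleted (while updating the
environment), and polarity is tracked through negations. -/
def approxCore {V : Vocab}
    (k : (ℕ → Option (SCLFormula V)) → Bool → ℕ → SCLFormula V) :
    (ℕ → Option (SCLFormula V)) → Bool → SCLFormula V → SCLFormula V
  | _, _, .bot => .bot
  | _, _, .eq x y => .eq x y
  | _, _, .rel R a => .rel R a
  | e, b, .claim L => k e b L
  | e, b, .not φ => .not (approxCore k e (!b) φ)
  | e, b, .and φ ψ => .and (approxCore k e b φ) (approxCore k e b ψ)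
  | e, b, .or φ ψ => .or (approxCore k e b φ) (approxCore k e b ψ)
  | e, b, .ex x φ => .ex x (approxCore k e b φ)
  | e, b, .all x φ => .all x (approxCore k e b φ)
  | e, b, .lab L φ => approxCore k (Function.update e L (some (.lab L φ))) b φ

/-- `approx n e b φ` unfolds each claim symbol of `φ` (in environment `e`,
under polarity `b`) through `n` jumps to reference formulas; claim symbols
reached with exhausted budget (or with no reference formula) are replaced by
`⊥` at positive occurrences and `⊤` (i.e. `¬⊥`) at negative occurrences, and
all label symbols are deleted. -/
def approx {V : Vocab} : ℕ → (ℕ → Option (SCLFormula V)) → Bool → SCLFormula V → SCLFormula V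
  | 0 => approxCore fun _ b _ => if b then .bot else .not .bot
  | n + 1 => approxCore fun e b L =>
      match e L with
      | some χ => approx n e b χ
      | none => if b then .bot else .not .bot

/-- The `n`-th approximant `Φⁿ_φ` of `φ`: the first-order formula obtained
from the `n`-th unfolding of `φ` by deleting all label symbols and replacing
positive claim occurrences by `⊥` and negative ones by `⊤`. -/
def approximant {V : Vocab} (φ : SCLFormula V) (n : ℕ) : SCLFormula V :=
  approx n (fun _ => none) true φ

/-! ## Vocabulary extensions, expansions and reducts -/

/-- The vocabulary `τ'` obtained from `V` by adding new relation symbols from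
`N` (with arities `na`). -/
def extVocab (V : Vocab) (N : Type) (na : N → ℕ) : Vocab :=
  ⟨V.Rel ⊕ N, Sum.elim V.arity na⟩

/-- The expansion of a `V`-model `M` to an `extVocab V N na`-model, using `J`
to interpret the new relation symbols. -/
def expand {V : Vocab} {N : Type} {na : N → ℕ} (M : Struct.{u} V)
    (J : ∀ n : N, (Fin (na n) → M.Dom) → Prop) : Struct.{u} (extVocab V N na) where
  Dom := M.Dom
  dom_nonempty := M.dom_nonempty
  interp := fun R =>
    match R with
    | Sum.inl r => M.interp r
    | Sum.inr n => J n

/-- The reduct `𝔄'↾τ` of an `extVocab V N na`-model to the vocabulary `V`. -/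
def reduct {V : Vocab} {N : Type} {na : N → ℕ}
    (M' : Struct.{u} (extVocab V N na)) : Struct.{u} V where
  Dom := M'.Dom
  dom_nonempty := M'.dom_nonempty
  interp := fun R => M'.interp (Sum.inl R)

/-- `φ` uses only the variables `0, …, k−1` (free or bound), i.e. it belongs
to the `k`-variable fragment. -/
def UsesVarsLt {V : Vocab} (k : ℕ) (φ : SCLFormula V) : Prop :=
  ∀ x ∈ φ.vars, x < k

/-- The empty vocabulary. -/
def emptyVocab : Vocab := ⟨Empty, fun e => e.elim⟩

/-!
Over the empty vocabulary an SCL formula `φ` can only compare the values of its variables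
`W = φ.vars`. Hence pairs of positions of the evaluation games on two structures that carry
the same formula, environment and polarity, and assignments with the same equality type on
`W`, form a bisimulation as soon as both domains have at least `|W|` elements: a quantifier
move in one game is answered by an element that is equal to the same variables, or fresh.
Eloise's winning strategies transfer along bisimulations (she plays in the second game
while shadowing her strategy in the first), so `φ` cannot separate a structure with
`|W| + 1` elements from an infinite one.

Finiteness is ∀SO-definable through Dedekind finiteness: a set is finite iff every
injective self-map is surjective, which is first-order in a universally quantified binary
relation.
-/

namespace List

variable {α : Type*}

lemma ofFn_val_succ_succ (g : ℕ → α) (n : ℕ) :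
    (ofFn fun i : Fin (n + 1 + 1) => g i) = (ofFn fun i : Fin (n + 1) => g i) ++ [g (n + 1)] := by
  rw [ofFn_succ']
  simp [concat_eq_append]

lemma getLast?_ofFn_val_succ (g : ℕ → α) (n : ℕ) :
    (ofFn fun i : Fin (n + 1) => g i).getLast? = some (g n) := by
  cases n with
  | zero => simp
  | succ n => rw [ofFn_val_succ_succ, getLast?_concat]

lemma eq_ofFn_of_forall_eq_append_singleton {L : ℕ → List α} {a : α} (h₀ : L 0 = [a])
    (hs : ∀ n, ∃ x, L (n + 1) = L n ++ [x]) (n : ℕ) :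
    L n = ofFn fun i : Fin (n + 1) => (L i).getLast?.getD a := by
  induction n with
  | zero => simp [h₀]
  | succ n ih =>
    obtain ⟨x, hx⟩ := hs n
    rw [ofFn_val_succ_succ (fun k => (L k).getLast?.getD a), ← ih, hx, getLast?_concat,
      Option.getD_some]

end List

namespace GameArena

variable {P : Type*} {Q : Type*}

section Plays

variable (A : GameArena P)

lemma isWalkFrom_iff {v : P} {w : List P} :
    A.IsWalkFrom v w ↔ w.head? = some v ∧ w.IsChain A.edge := Iff.rfl

lemma isWalkFrom_singleton (v : P) : A.IsWalkFrom v [v] :=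
  ⟨rfl, List.isChain_singleton v⟩

lemma isWalkFrom_snoc_iff {v p x : P} {l : List P} (hl : l.getLast? = some p) :
    A.IsWalkFrom v (l ++ [x]) ↔ A.IsWalkFrom v l ∧ A.edge p x := by
  have hne : l ≠ [] := by rintro rfl; simp at hl
  simp [isWalkFrom_iff, List.head?_append_of_ne_nil _ hne, List.isChain_append, hl, and_assoc]

lemma followsFin_singleton (pl : Player) (σ : List P → P) (v : P) : A.FollowsFin pl σ [v] := by
  intro q u x hq hu _
  obtain rfl : q = [] := List.eq_nil_of_length_eq_zero (by simpa using hq.length_le)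
  simp at hu

lemma followsFin_snoc_iff {pl : Player} {σ : List P → P} {l : List P} {x : P} :
    A.FollowsFin pl σ (l ++ [x]) ↔
      A.FollowsFin pl σ l ∧ ∀ p, l.getLast? = some p → A.turn p = pl → x = σ l := by
  constructor
  · intro h
    exact ⟨fun q u y hq => h q u y (hq.trans (List.prefix_append l [x])),
      fun p hp hturn => h l p x (List.prefix_refl _) hp hturn⟩
  · rintro ⟨h, hx⟩ q u y hq hu hturn
    rcases List.prefix_concat_iff.mp hq with heq | hq
    · obtain ⟨rfl, hy⟩ := List.append_inj' heq rfl
      obtain rfl : y = x := by simpa using hy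
      exact hx u hu hturn
    · exact h q u y hq hu hturn

lemma isInfPlay_iff {v : P} {g : ℕ → P} :
    A.IsInfPlay v g ↔ ∀ n, A.IsWalkFrom v (List.ofFn fun i : Fin (n + 1) => g i) := by
  refine ⟨fun ⟨h₀, hg⟩ n => ?_, fun h => ⟨by simpa using (h 0).1, fun n => ?_⟩⟩
  · induction n with
    | zero => simpa [h₀] using A.isWalkFrom_singleton v
    | succ n ih =>
      rw [List.ofFn_val_succ_succ, A.isWalkFrom_snoc_iff (List.getLast?_ofFn_val_succ g n)]
      exact ⟨ih, hg n⟩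
  · have := h (n + 1)
    rw [List.ofFn_val_succ_succ, A.isWalkFrom_snoc_iff (List.getLast?_ofFn_val_succ g n)] at this
    exact this.2

lemma followsInf_iff {pl : Player} {σ : List P → P} {g : ℕ → P} :
    A.FollowsInf pl σ g ↔ ∀ n, A.FollowsFin pl σ (List.ofFn fun i : Fin (n + 1) => g i) := by
  refine ⟨fun hg n => ?_, fun h n hturn => ?_⟩
  · induction n with
    | zero => simpa using A.followsFin_singleton pl σ (g 0)
    | succ n ih =>
      rw [List.ofFn_val_succ_succ, followsFin_snoc_iff]
      refine ⟨ih, fun p hp hturn => hg n ?_⟩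
      rw [List.getLast?_ofFn_val_succ, Option.some_inj] at hp
      rwa [hp]
  · have := h (n + 1)
    rw [List.ofFn_val_succ_succ, followsFin_snoc_iff] at this
    exact this.2 _ (List.getLast?_ofFn_val_succ g n) hturn

end Plays

structure IsBisimulation (A : GameArena P) (B : GameArena Q) (R : P → Q → Prop) : Prop where
  turn_eq : ∀ {p q}, R p q → A.turn p = B.turn q
  win_iff : ∀ {p q}, R p q → ∀ pl, A.win p pl ↔ B.win q pl
  forth : ∀ {p q p'}, R p q → A.edge p p' → ∃ q', B.edge q q' ∧ R p' q'
  back : ∀ {p q q'}, R p q → B.edge q q' → ∃ p', A.edge p p' ∧ R p' q'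

variable {A : GameArena P} {B : GameArena Q} {R : P → Q → Prop}

lemma IsBisimulation.deadEnd_iff (hR : A.IsBisimulation B R) {p : P} {q : Q} (h : R p q) :
    A.DeadEnd p ↔ B.DeadEnd q := by
  refine ⟨fun hp q' hq' => ?_, fun hq p' hp' => ?_⟩
  · obtain ⟨p', hp', -⟩ := hR.back h hq'
    exact hp p' hp'
  · obtain ⟨q', hq', -⟩ := hR.forth h hp'
    exact hq q' hq'

section Shadow

variable (A B R) (v₀ : P) (σ : List P → P) (q₀ : Q)

/-- The move of `A` answering the move to `q` in `B`, after the walk `l` of `A` ending at `p`: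
`σ`'s choice at Eloise's positions, a move to a position related to `q` at Abelard's. -/
noncomputable def liftNext (l : List P) (p : P) (q : Q) : P :=
  if A.turn p = .eloise then σ l else @Classical.epsilon P ⟨p⟩ fun p' => A.edge p p' ∧ R p' q

noncomputable def liftStep (l : List P) (q : Q) : List P :=
  match l.getLast? with
  | none => [v₀]
  | some p => l ++ [liftNext A R σ l p q]

noncomputable def lift (w : List Q) : List P :=
  w.foldl (liftStep A R v₀ σ) []

open Classical in
/-- Eloise's strategy in `B` shadowing `σ` through `lift`; the fallback to an arbitrary move
only serves legality on walks that are not tracked by their lift. -/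
noncomputable def shadow (w : List Q) : Q :=
  if h : ∃ q', B.edge (w.getLast?.getD q₀) q' ∧ R (σ (lift A R v₀ σ w)) q' then h.choose
  else @Classical.epsilon Q ⟨q₀⟩ (B.edge (w.getLast?.getD q₀))

def Tracks (w : List Q) : Prop :=
  A.IsWalkFrom v₀ (lift A R v₀ σ w) ∧ A.FollowsFin .eloise σ (lift A R v₀ σ w) ∧
    ∃ p u, (lift A R v₀ σ w).getLast? = some p ∧ w.getLast? = some u ∧ R p u

variable {A B R v₀ σ q₀}

lemma lift_singleton (q : Q) : lift A R v₀ σ [q] = [v₀] := rfl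

lemma lift_snoc {w : List Q} {p : P} (hp : (lift A R v₀ σ w).getLast? = some p) (q : Q) :
    lift A R v₀ σ (w ++ [q]) = lift A R v₀ σ w ++ [liftNext A R σ (lift A R v₀ σ w) p q] := by
  rw [lift, List.foldl_concat, ← lift, liftStep, hp]

lemma legalFor_shadow : B.LegalFor .eloise q₀ (shadow A B R v₀ σ q₀) := by
  intro w u _ hu _ hmove
  unfold shadow
  rw [hu, Option.getD_some]
  split_ifs with h
  · exact h.choose_spec.1
  · exact Classical.epsilon_spec hmove

lemma shadow_spec {w : List Q} {u : Q} (hu : w.getLast? = some u)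
    (h : ∃ q', B.edge u q' ∧ R (σ (lift A R v₀ σ w)) q') :
    B.edge u (shadow A B R v₀ σ q₀ w) ∧ R (σ (lift A R v₀ σ w)) (shadow A B R v₀ σ q₀ w) := by
  unfold shadow
  rw [hu, Option.getD_some, dif_pos h]
  exact h.choose_spec

lemma IsBisimulation.liftNext_spec (hR : A.IsBisimulation B R) (hσ : A.LegalFor .eloise v₀ σ)
    {w : List Q} {p : P} {u q : Q} (hwalk : A.IsWalkFrom v₀ (lift A R v₀ σ w))
    (hp : (lift A R v₀ σ w).getLast? = some p) (hu : w.getLast? = some u) (hpu : R p u)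
    (he : B.edge u q) (hq : B.turn u = .eloise → q = shadow A B R v₀ σ q₀ w) :
    A.edge p (liftNext A R σ (lift A R v₀ σ w) p q) ∧
      R (liftNext A R σ (lift A R v₀ σ w) p q) q ∧
      (A.turn p = .eloise → liftNext A R σ (lift A R v₀ σ w) p q = σ (lift A R v₀ σ w)) := by
  unfold liftNext
  split_ifs with hturn
  · have hmove : A.edge p (σ (lift A R v₀ σ w)) :=
      hσ _ p hwalk hp hturn (not_forall_not.mp fun hd => (hR.deadEnd_iff hpu).mp hd q he)
    rw [hq ((hR.turn_eq hpu).symm.trans hturn)]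
    exact ⟨hmove, (shadow_spec hu (hR.forth hpu hmove)).2, fun _ => rfl⟩
  · obtain ⟨hedge, hrel⟩ := Classical.epsilon_spec (hR.back hpu he)
    exact ⟨hedge, hrel, fun h => absurd h hturn⟩

lemma IsBisimulation.tracks_snoc (hR : A.IsBisimulation B R) (hσ : A.LegalFor .eloise v₀ σ)
    {w : List Q} {u q : Q} (hw : Tracks A R v₀ σ w) (hu : w.getLast? = some u)
    (he : B.edge u q) (hq : B.turn u = .eloise → q = shadow A B R v₀ σ q₀ w) :
    Tracks A R v₀ σ (w ++ [q]) := by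
  obtain ⟨hwalk, hfol, p, u', hp, hu', hpu⟩ := hw
  obtain rfl : u' = u := Option.some_inj.mp (hu'.symm.trans hu)
  obtain ⟨hedge, hrel, hσmove⟩ := hR.liftNext_spec hσ hwalk hp hu hpu he hq
  rw [Tracks, lift_snoc hp, isWalkFrom_snoc_iff _ hp, followsFin_snoc_iff]
  refine ⟨⟨hwalk, hedge⟩, ⟨hfol, fun p' hp' hturn => ?_⟩, _, q, List.getLast?_concat,
    List.getLast?_concat, hrel⟩
  rw [hp, Option.some_inj] at hp'
  exact hσmove (hp' ▸ hturn)

lemma IsBisimulation.tracks_of_followsFin (hR : A.IsBisimulation B R)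
    (hσ : A.LegalFor .eloise v₀ σ) (h₀ : R v₀ q₀) (w : List Q) (hwalk : B.IsWalkFrom q₀ w)
    (hfol : B.FollowsFin .eloise (shadow A B R v₀ σ q₀) w) : Tracks A R v₀ σ w := by
  induction w using List.reverseRecOn with
  | nil => simp [isWalkFrom_iff] at hwalk
  | append_singleton w q ih =>
    rcases List.eq_nil_or_concat' w with rfl | ⟨w', u, rfl⟩
    · obtain rfl : q₀ = q := by simpa [isWalkFrom_iff] using hwalk.1.symm
      exact ⟨A.isWalkFrom_singleton v₀, A.followsFin_singleton _ σ v₀, v₀, q₀, rfl, rfl, h₀⟩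
    · have hu : (w' ++ [u]).getLast? = some u := List.getLast?_concat
      rw [isWalkFrom_snoc_iff _ hu] at hwalk
      rw [followsFin_snoc_iff] at hfol
      exact hR.tracks_snoc hσ (ih hwalk.1 hfol.1) hu hwalk.2 (hfol.2 u hu)

lemma IsBisimulation.win_of_isFinitePlay (hR : A.IsBisimulation B R)
    (hσ : A.WinningStrategy .eloise v₀ σ) (h₀ : R v₀ q₀) {w : List Q} {u : Q}
    (hplay : B.IsFinitePlay q₀ w) (hfol : B.FollowsFin .eloise (shadow A B R v₀ σ q₀) w)
    (hu : w.getLast? = some u) : B.win u .eloise := by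
  obtain ⟨hwalk, hfolA, p, u', hp, hu', hpu⟩ := hR.tracks_of_followsFin hσ.1 h₀ w hplay.1 hfol
  obtain rfl : u = u' := Option.some_inj.mp (hu.symm.trans hu')
  have hdead : A.DeadEnd p := (hR.deadEnd_iff hpu).mpr (hplay.2 u hu')
  obtain ⟨p', hp', hwin⟩ :=
    hσ.2.1 _ ⟨hwalk, fun p' hp' => Option.some_inj.mp (hp'.symm.trans hp) ▸ hdead⟩ hfolA
  rw [hp, Option.some_inj] at hp'
  exact (hR.win_iff hpu _).mp (hp' ▸ hwin)

/-- The lifts of the prefixes of an infinite play of `B` following `shadow` are the prefixes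
of an infinite play of `A` following `σ`, which cannot exist. -/
lemma IsBisimulation.not_followsInf_shadow (hR : A.IsBisimulation B R)
    (hσ : A.WinningStrategy .eloise v₀ σ) (h₀ : R v₀ q₀) {f : ℕ → Q} (hf : B.IsInfPlay q₀ f) :
    ¬ B.FollowsInf .eloise (shadow A B R v₀ σ q₀) f := by
  intro hfol
  have htracks (n : ℕ) : Tracks A R v₀ σ (List.ofFn fun i : Fin (n + 1) => f i) :=
    hR.tracks_of_followsFin hσ.1 h₀ _ (B.isInfPlay_iff.mp hf n) (B.followsInf_iff.mp hfol n)
  have hlifts := List.eq_ofFn_of_forall_eq_append_singleton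
    (L := fun n => lift A R v₀ σ (List.ofFn fun i : Fin (n + 1) => f i)) (a := v₀)
    (by simp [lift_singleton]) fun n => by
      obtain ⟨-, -, p, -, hp, -⟩ := htracks n
      exact ⟨_, by rw [List.ofFn_val_succ_succ, lift_snoc hp]⟩
  refine hσ.2.2
    (fun n => (lift A R v₀ σ (List.ofFn fun i : Fin (n + 1) => f i)).getLast?.getD v₀)
    (A.isInfPlay_iff.mpr fun n => ?_) (A.followsInf_iff.mpr fun n => ?_)
  · exact hlifts n ▸ (htracks n).1
  · exact hlifts n ▸ (htracks n).2.1

end Shadow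

theorem IsBisimulation.hasWinningStrategy (hR : A.IsBisimulation B R) {v₀ : P} {q₀ : Q}
    (h₀ : R v₀ q₀) (h : A.HasWinningStrategy .eloise v₀) : B.HasWinningStrategy .eloise q₀ := by
  obtain ⟨σ, hσ⟩ := h
  refine ⟨shadow A B R v₀ σ q₀, legalFor_shadow, fun w hplay hfol => ?_,
    fun f hf => hR.not_followsInf_shadow hσ h₀ hf⟩
  have hw : w ≠ [] := by
    rintro rfl
    simp [IsFinitePlay, isWalkFrom_iff] at hplay
  exact ⟨_, List.getLast?_eq_some_getLast hw,
    hR.win_of_isFinitePlay hσ h₀ hplay hfol (List.getLast?_eq_some_getLast hw)⟩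

end GameArena

section SameEqType

variable {D₁ : Type*} {D₂ : Type*} {W : Finset ℕ} {s : ℕ → D₁} {t : ℕ → D₂}

def SameEqType (W : Finset ℕ) (s : ℕ → D₁) (t : ℕ → D₂) : Prop :=
  ∀ x ∈ W, ∀ y ∈ W, s x = s y ↔ t x = t y

lemma SameEqType.symm (h : SameEqType W s t) : SameEqType W t s :=
  fun x hx y hy => (h x hx y hy).symm

lemma SameEqType.update (h : SameEqType W s t) {x : ℕ} {a : D₁} {b : D₂}
    (hab : ∀ y ∈ W, y ≠ x → (s y = a ↔ t y = b)) :
    SameEqType W (Function.update s x a) (Function.update t x b) := by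
  intro y hy z hz
  rcases eq_or_ne x y with rfl | hxy <;> rcases eq_or_ne x z with rfl | hxz
  · simp
  · simpa [Function.update_of_ne hxz.symm, eq_comm] using hab z hz hxz.symm
  · simp [Function.update_of_ne hxy.symm, hab y hy hxy.symm]
  · simp [Function.update_of_ne hxy.symm, Function.update_of_ne hxz.symm, h y hy z hz]

lemma SameEqType.exists_update (h : SameEqType W s t) {x : ℕ} (hx : x ∈ W) (a : D₁)
    (hW : (W.card : ℕ∞) ≤ ENat.card D₂) :
    ∃ b, SameEqType W (Function.update s x a) (Function.update t x b) := by
  classical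
  by_cases ha : ∃ y ∈ W, y ≠ x ∧ s y = a
  · obtain ⟨y₀, hy₀, -, rfl⟩ := ha
    exact ⟨t y₀, h.update fun y hy _ => h y hy y₀ hy₀⟩
  · push Not at ha
    have hcard : (((W.erase x).image t).card : ℕ∞) < ENat.card D₂ := by
      refine lt_of_lt_of_le ?_ hW
      exact_mod_cast Finset.card_image_le.trans_lt (Finset.card_erase_lt_of_mem hx)
    obtain ⟨b, hb⟩ := Finset.exists_not_mem_of_card_lt_enatCard hcard
    refine ⟨b, h.update fun y hy hyx => iff_of_false (ha y hy hyx) fun hyb => hb ?_⟩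
    exact Finset.mem_image.mpr ⟨y, Finset.mem_erase.mpr ⟨hyx, hy⟩, hyb⟩

lemma exists_sameEqType {D₁ D₂ : Type u} [Nonempty D₁] (W : Finset ℕ) (t : ℕ → D₂)
    (hW : (W.card : ℕ∞) ≤ ENat.card D₁) : ∃ s : ℕ → D₁, SameEqType W s t := by
  classical
  obtain ⟨e⟩ : Nonempty (W.image t ↪ D₁) := by
    rw [← Cardinal.le_def, Cardinal.mk_coe_finset, ← Cardinal.natCast_le_toENat]
    exact le_trans (by exact_mod_cast Finset.card_image_le) hW
  refine ⟨fun x => if hx : x ∈ W then e ⟨t x, Finset.mem_image_of_mem t hx⟩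
    else Classical.arbitrary D₁, fun x hx y hy => ?_⟩
  simp [hx, hy, e.apply_eq_iff_eq]

end SameEqType

namespace SCLPos

variable {D₁ D₂ : Type u} {W : Finset ℕ}

def VarsIn {V : Vocab} {D : Type u} (W : Finset ℕ) (p : SCLPos V D) : Prop :=
  p.form.vars ⊆ W ∧ ∀ L χ, p.env L = some χ → χ.vars ⊆ W

lemma VarsIn.of_uStep {V : Vocab} {M : Struct.{u} V} {p p' : SCLPos V M.Dom}
    (hp : p.VarsIn W) (h : UStep M p p') : p'.VarsIn W := by
  obtain ⟨hform, henv⟩ := hp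
  cases h with
  | neg => exact ⟨hform, henv⟩
  | andLeft | orLeft => exact ⟨Finset.union_subset_left hform, henv⟩
  | andRight | orRight => exact ⟨Finset.union_subset_right hform, henv⟩
  | exStep | allStep => exact ⟨(Finset.insert_subset_iff.mp hform).2, henv⟩
  | claimStep L e s b χ hχ => exact ⟨henv L χ hχ, henv⟩
  | labStep L φ =>
    refine ⟨hform, fun L' χ hχ => ?_⟩
    dsimp only at hχ
    rcases eq_or_ne L' L with rfl | hne
    · rw [Function.update_self, Option.some_inj] at hχ
      exact hχ ▸ hform
    · exact henv L' χ (by rwa [Function.update_of_ne hne] at hχ)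

lemma atomSat_iff_of_sameEqType {M₁ M₂ : Struct.{u} emptyVocab} {s : ℕ → M₁.Dom}
    {t : ℕ → M₂.Dom} {φ : SCLFormula emptyVocab} (hφ : φ.vars ⊆ W) (hst : SameEqType W s t) :
    atomSat M₁ s φ ↔ atomSat M₂ t φ := by
  cases φ with
  | eq x y => exact hst x (hφ (by simp [SCLFormula.vars])) y (hφ (by simp [SCLFormula.vars]))
  | rel R => exact R.elim
  | _ => exact Iff.rfl

structure Similar (W : Finset ℕ) (p : SCLPos emptyVocab D₁) (q : SCLPos emptyVocab D₂) :
    Prop where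
  form_eq : p.form = q.form
  env_eq : p.env = q.env
  pol_eq : p.pol = q.pol
  varsIn : p.VarsIn W
  sameEqType : SameEqType W p.asg q.asg

variable {p : SCLPos emptyVocab D₁} {q : SCLPos emptyVocab D₂}

lemma Similar.symm (h : Similar W p q) : Similar W q p :=
  ⟨h.form_eq.symm, h.env_eq.symm, h.pol_eq.symm,
    by rw [VarsIn, ← h.form_eq, ← h.env_eq]; exact h.varsIn, h.sameEqType.symm⟩

lemma Similar.posTurn_eq (h : Similar W p q) : posTurn p = posTurn q := by
  simp only [posTurn, h.form_eq, h.pol_eq]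

lemma Similar.posWin_iff {M₁ M₂ : Struct.{u} emptyVocab} {p : SCLPos emptyVocab M₁.Dom}
    {q : SCLPos emptyVocab M₂.Dom} (h : Similar W p q) (pl : Player) :
    posWin M₁ p pl ↔ posWin M₂ q pl := by
  cases pl <;>
    simp only [posWin, ← h.form_eq, ← h.pol_eq,
      atomSat_iff_of_sameEqType h.varsIn.1 h.sameEqType]

lemma Similar.forth {M₁ M₂ : Struct.{u} emptyVocab} {p p' : SCLPos emptyVocab M₁.Dom}
    {q : SCLPos emptyVocab M₂.Dom} (hW : (W.card : ℕ∞) ≤ ENat.card M₂.Dom) (h : Similar W p q)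
    (hp : UStep M₁ p p') : ∃ q', UStep M₂ q q' ∧ Similar W p' q' := by
  obtain ⟨f, e, s, b⟩ := p
  obtain ⟨f', e', t, b'⟩ := q
  obtain ⟨hf, he, hb, hvars, hst⟩ := h
  dsimp only at hf he hb hst
  subst hf he hb
  suffices ∃ t', UStep M₂ ⟨f, e, t, b⟩ ⟨p'.form, p'.env, t', p'.pol⟩ ∧ SameEqType W p'.asg t' by
    obtain ⟨t', hstep, hst'⟩ := this
    exact ⟨_, hstep, rfl, rfl, rfl, hvars.of_uStep hp, hst'⟩
  cases hp with
  | neg => exact ⟨t, .neg .., hst⟩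
  | andLeft => exact ⟨t, .andLeft .., hst⟩
  | andRight => exact ⟨t, .andRight .., hst⟩
  | orLeft => exact ⟨t, .orLeft .., hst⟩
  | orRight => exact ⟨t, .orRight .., hst⟩
  | labStep => exact ⟨t, .labStep .., hst⟩
  | claimStep L e s b χ hχ => exact ⟨t, .claimStep L e t b χ hχ, hst⟩
  | exStep x φ e s b a =>
    obtain ⟨c, hc⟩ := hst.exists_update (hvars.1 (Finset.mem_insert_self x _)) a hW
    exact ⟨_, .exStep x φ e t b c, hc⟩
  | allStep x φ e s b a =>
    obtain ⟨c, hc⟩ := hst.exists_update (hvars.1 (Finset.mem_insert_self x _)) a hW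
    exact ⟨_, .allStep x φ e t b c, hc⟩

lemma isBisimulation_similar {M₁ M₂ : Struct.{u} emptyVocab}
    (h₁ : (W.card : ℕ∞) ≤ ENat.card M₁.Dom) (h₂ : (W.card : ℕ∞) ≤ ENat.card M₂.Dom) :
    (gameU M₁).IsBisimulation (gameU M₂) (Similar W) where
  turn_eq h := h.posTurn_eq
  win_iff h := h.posWin_iff
  forth h hp := h.forth h₂ hp
  back h hq := by
    obtain ⟨p', hp', hsim⟩ := h.symm.forth h₁ hq
    exact ⟨p', hp', hsim.symm⟩

end SCLPos

theorem sclTrue_of_forall_sclTrue {M₁ M₂ : Struct.{u} emptyVocab} {φ : SCLFormula emptyVocab}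
    (h₁ : (φ.vars.card : ℕ∞) ≤ ENat.card M₁.Dom) (h₂ : (φ.vars.card : ℕ∞) ≤ ENat.card M₂.Dom)
    (h : ∀ s, SCLTrue M₁ s φ) (t : ℕ → M₂.Dom) : SCLTrue M₂ t φ := by
  obtain ⟨s, hst⟩ := exists_sameEqType φ.vars t h₁
  exact (SCLPos.isBisimulation_similar h₁ h₂).hasWinningStrategy
    ⟨rfl, rfl, rfl, ⟨subset_rfl, fun _ _ h => by cases h⟩, hst⟩ (h s)

section DedekindFiniteness

abbrev binVocab : Vocab := extVocab emptyVocab Unit fun _ => 2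

def binAtom (x y : ℕ) : SCLFormula binVocab := .rel (Sum.inr ()) ![x, y]

/-- `¬ (∀x ∃y F x y ∧ ∀x y z (F x z ∧ F y z → x = y) ∧ ¬ ∀y ∃x F x y)` -/
def dedekindFinitenessAxiom : SCLFormula binVocab :=
  .not (.and (.all 0 (.ex 1 (binAtom 0 1)))
    (.and (.all 0 (.all 1 (.all 2
        (.not (.and (binAtom 0 2) (.and (binAtom 1 2) (.not (.eq 0 1))))))))
      (.not (.all 1 (.ex 0 (binAtom 0 1))))))

lemma dedekindFinitenessAxiom_isFO : dedekindFinitenessAxiom.IsFO := by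
  simp [dedekindFinitenessAxiom, binAtom, SCLFormula.IsFO]

lemma dedekindFinitenessAxiom_freeVars : dedekindFinitenessAxiom.freeVars = ∅ := by
  simp [dedekindFinitenessAxiom, binAtom, SCLFormula.freeVars]
  decide

lemma foSat_dedekindFinitenessAxiom_iff (M : Struct.{u} emptyVocab)
    (J : ∀ _ : Unit, (Fin 2 → M.Dom) → Prop) (s : ℕ → M.Dom) :
    FOSat (expand M J) s dedekindFinitenessAxiom ↔
      ¬ ((∀ a, ∃ b, J () ![a, b]) ∧ (∀ a b c, J () ![a, c] → J () ![b, c] → a = b) ∧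
        ¬ ∀ b, ∃ a, J () ![a, b]) := by
  have hatom (t : ℕ → (expand M J).Dom) (x y : ℕ) :
      FOSat (expand M J) t (binAtom x y) ↔ J () ![t x, t y] := by
    refine iff_of_eq (congrArg (J ()) ?_)
    ext i
    fin_cases i <;> rfl
  simp only [dedekindFinitenessAxiom, FOSat, hatom, Function.update_apply]
  norm_num
  exact Iff.rfl

lemma exists_injective_not_surjective (D : Type u) [Infinite D] :
    ∃ g : D → D, Function.Injective g ∧ ¬ Function.Surjective g := by
  obtain ⟨e⟩ : Nonempty (Option D ≃ D) := Cardinal.eq.mp <| by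
    rw [Cardinal.mk_option, Cardinal.add_one_eq (Cardinal.aleph0_le_mk D)]
  refine ⟨e ∘ some, e.injective.comp (Option.some_injective D), fun h => ?_⟩
  obtain ⟨a, ha⟩ := h (e none)
  exact Option.some_ne_none a (e.injective ha)

lemma finite_iff_forall_foSat_dedekindFinitenessAxiom (M : Struct.{u} emptyVocab) :
    Finite M.Dom ↔ ∀ J : ∀ _ : Unit, (Fin 2 → M.Dom) → Prop, ∀ s : ℕ → M.Dom,
      FOSat (expand M J) s dedekindFinitenessAxiom := by
  refine ⟨fun _ J s => ?_, fun h => ?_⟩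
  · rw [foSat_dedekindFinitenessAxiom_iff]
    rintro ⟨htot, hinj, hnsurj⟩
    choose f hf using htot
    have hfinj : f.Injective := fun a b hab => hinj a b (f a) (hf a) (hab ▸ hf b)
    exact hnsurj fun b =>
      (Finite.surjective_of_injective hfinj b).imp fun a (ha : f a = b) => ha ▸ hf a
  · by_contra hfin
    have := not_finite_iff_infinite.mp hfin
    obtain ⟨g, hg, hgs⟩ := exists_injective_not_surjective M.Dom
    exact (foSat_dedekindFinitenessAxiom_iff M _ (fun _ => Classical.arbitrary _)).mp
      (h (fun _ v => g (v 0) = v 1) _)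
      ⟨fun a => ⟨g a, rfl⟩, fun a b c ha hb => hg (ha.trans hb.symm), hgs⟩

end DedekindFiniteness

/-- The class of finite structures over the empty
vocabulary is not definable in SCL (unbounded semantics), although it is
definable in universal second-order logic; hence SCL is strictly less
expressive than ∀SO. -/
theorem finiteness_not_definable_in_SCL :
    (¬ ∃ φ : SCLFormula emptyVocab, φ.freeVars = ∅ ∧
        ∀ M : Struct.{u} emptyVocab,
          ((∀ s : ℕ → M.Dom, SCLTrue M s φ) ↔ Finite M.Dom)) ∧
    (∃ (N : Type) (_ : Finite N) (na : N → ℕ)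
        (Θ : SCLFormula (extVocab emptyVocab N na)),
        Θ.IsFO ∧ Θ.freeVars = ∅ ∧
        ∀ M : Struct.{u} emptyVocab,
          (Finite M.Dom ↔
            ∀ J : ∀ n : N, (Fin (na n) → M.Dom) → Prop,
              ∀ s : ℕ → M.Dom, FOSat (expand M J) s Θ)) := by
  refine ⟨?_, Unit, inferInstance, fun _ => 2, dedekindFinitenessAxiom,
    dedekindFinitenessAxiom_isFO, dedekindFinitenessAxiom_freeVars,
    finite_iff_forall_foSat_dedekindFinitenessAxiom⟩
  rintro ⟨φ, -, hφ⟩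
  let MFin : Struct.{u} emptyVocab :=
    ⟨ULift (Fin (φ.vars.card + 1)), inferInstance, fun R => R.elim⟩
  let MNat : Struct.{u} emptyVocab := ⟨ULift ℕ, inferInstance, fun R => R.elim⟩
  have hFin : ∀ s, SCLTrue MFin s φ := (hφ MFin).mpr (inferInstanceAs (Finite (ULift (Fin _))))
  have : Finite (ULift ℕ) :=
    (hφ MNat).mp (sclTrue_of_forall_sclTrue (by simp [MFin]) (by simp [MNat]) hFin)
  exact not_finite (ULift ℕ)
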